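/- arXiv:2303.05316 — 2 statements merged into one kernel-verified Lean document; each statement's English description precedes it below -/
import Mathlib

section
/- The topological stable rank of A(p) equals 1; that is, the set of invertible elements of A(p) is dense in A(p): for every f ∈ A(p) and every δ > 0 there exists g ∈ A(p) which is invertible with respect to the multiplication ∗ and satisfies ‖g − f‖ < δ. -/
open scoped BigOperators

/-- A weight: a sequence of positive reals. -/
structure GoodWeight : Type where
  p : ℕ → ℝ
  pos : ∀ n, 0 < p n

namespace GoodWeight

/-- The growth condition `lim_{n→∞} p(n)^(1/n) = ∞`. -/
def Grows (w : GoodWeight) : Prop :=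
  Filter.Tendsto (fun n : ℕ => w.p n ^ ((n : ℝ)⁻¹)) Filter.atTop Filter.atTop

/-- The Banach algebra `A(p)`, in its sequence model: a sequence `a : ℕ → ℂ` (the
Taylor coefficients at `0` of the corresponding entire function) such that
`sup_n p(n)|a(n)| < ∞`. -/
def Ap (w : GoodWeight) : Type :=
  {a : ℕ → ℂ // ∃ C : ℝ, ∀ n, w.p n * ‖a n‖ ≤ C}

namespace Ap

variable {w : GoodWeight}

instance : Zero w.Ap :=
  ⟨⟨fun _ => 0, 0, fun n => by simp⟩⟩

instance : Add w.Ap :=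
  ⟨fun a b =>
    ⟨fun n => a.1 n + b.1 n, by
      obtain ⟨C, hC⟩ := a.2
      obtain ⟨D, hD⟩ := b.2
      refine ⟨C + D, fun n => ?_⟩
      have h1 : ‖a.1 n + b.1 n‖ ≤ ‖a.1 n‖ + ‖b.1 n‖ :=
        norm_add_le _ _
      calc w.p n * ‖a.1 n + b.1 n‖
          ≤ w.p n * ‖a.1 n‖ + w.p n * ‖b.1 n‖ := by
            rw [← mul_add]; exact mul_le_mul_of_nonneg_left h1 (w.pos n).le
        _ ≤ C + D := add_le_add (hC n) (hD n)⟩⟩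

instance : Neg w.Ap :=
  ⟨fun a =>
    ⟨fun n => -a.1 n, by
      obtain ⟨C, hC⟩ := a.2
      exact ⟨C, fun n => by simpa using hC n⟩⟩⟩

/-- The weighted Hadamard multiplication `(f ∗ g)(n) = p(n) f̂(n) ĝ(n)`. -/
instance : Mul w.Ap :=
  ⟨fun a b =>
    ⟨fun n => (w.p n : ℂ) * a.1 n * b.1 n, by
      obtain ⟨C, hC⟩ := a.2
      obtain ⟨D, hD⟩ := b.2
      refine ⟨C * D, fun n => ?_⟩
      have e : w.p n * ‖(w.p n : ℂ) * a.1 n * b.1 n‖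
          = (w.p n * ‖a.1 n‖) * (w.p n * ‖b.1 n‖) := by
        rw [norm_mul, norm_mul, Complex.norm_real, Real.norm_eq_abs, abs_of_pos (w.pos n)]; ring
      rw [e]
      have h0C : (0:ℝ) ≤ C :=
        le_trans (mul_nonneg (w.pos 0).le (norm_nonneg _)) (hC 0)
      exact mul_le_mul (hC n) (hD n) (mul_nonneg (w.pos n).le (norm_nonneg _)) h0C⟩⟩

/-- The identity element `ε`, with coefficients `1/p(n)`. -/
noncomputable instance : One w.Ap :=
  ⟨⟨fun n => ((w.p n : ℂ))⁻¹, 1, fun n => by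
      rw [norm_inv, Complex.norm_real, Real.norm_eq_abs, abs_of_pos (w.pos n),
        mul_inv_cancel₀ (w.pos n).ne']⟩⟩

instance : SMul ℂ w.Ap :=
  ⟨fun c a =>
    ⟨fun n => c * a.1 n, by
      obtain ⟨C, hC⟩ := a.2
      refine ⟨‖c‖ * C, fun n => ?_⟩
      rw [norm_mul]
      calc w.p n * (‖c‖ * ‖a.1 n‖)
          = ‖c‖ * (w.p n * ‖a.1 n‖) := by ring
        _ ≤ ‖c‖ * C := mul_le_mul_of_nonneg_left (hC n) (norm_nonneg c)⟩⟩

noncomputable instance : CommRing w.Ap where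
  add := (· + ·)
  add_assoc a b c := Subtype.ext (funext fun n => add_assoc _ _ _)
  zero := 0
  zero_add a := Subtype.ext (funext fun n => zero_add _)
  add_zero a := Subtype.ext (funext fun n => add_zero _)
  add_comm a b := Subtype.ext (funext fun n => add_comm _ _)
  nsmul := nsmulRec
  zsmul := zsmulRec
  mul := (· * ·)
  mul_assoc a b c := Subtype.ext (funext fun n => by
    show (w.p n : ℂ) * ((w.p n : ℂ) * a.1 n * b.1 n) * c.1 n
        = (w.p n : ℂ) * a.1 n * ((w.p n : ℂ) * b.1 n * c.1 n)
    ring)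
  one := 1
  one_mul a := Subtype.ext (funext fun n => by
    show (w.p n : ℂ) * ((w.p n : ℂ))⁻¹ * a.1 n = a.1 n
    have h : ((w.p n : ℝ) : ℂ) ≠ 0 := by exact_mod_cast (w.pos n).ne'
    rw [mul_inv_cancel₀ h, one_mul])
  mul_one a := Subtype.ext (funext fun n => by
    show (w.p n : ℂ) * a.1 n * ((w.p n : ℂ))⁻¹ = a.1 n
    have h : ((w.p n : ℝ) : ℂ) ≠ 0 := by exact_mod_cast (w.pos n).ne'
    field_simp)
  left_distrib a b c := Subtype.ext (funext fun n => by
    show (w.p n : ℂ) * a.1 n * (b.1 n + c.1 n)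
        = (w.p n : ℂ) * a.1 n * b.1 n + (w.p n : ℂ) * a.1 n * c.1 n
    ring)
  right_distrib a b c := Subtype.ext (funext fun n => by
    show (w.p n : ℂ) * (a.1 n + b.1 n) * c.1 n
        = (w.p n : ℂ) * a.1 n * c.1 n + (w.p n : ℂ) * b.1 n * c.1 n
    ring)
  zero_mul a := Subtype.ext (funext fun n => by
    show (w.p n : ℂ) * 0 * a.1 n = 0
    ring)
  mul_zero a := Subtype.ext (funext fun n => by
    show (w.p n : ℂ) * a.1 n * 0 = 0
    ring)
  mul_comm a b := Subtype.ext (funext fun n => by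
    show (w.p n : ℂ) * a.1 n * b.1 n = (w.p n : ℂ) * b.1 n * a.1 n
    ring)
  neg := Neg.neg
  neg_add_cancel a := Subtype.ext (funext fun n => neg_add_cancel _)

instance : Module ℂ w.Ap where
  smul := (· • ·)
  one_smul a := Subtype.ext (funext fun n => by
    show (1 : ℂ) * a.1 n = a.1 n
    ring)
  mul_smul c d a := Subtype.ext (funext fun n => by
    show (c * d) * a.1 n = c * (d * a.1 n)
    ring)
  smul_zero c := Subtype.ext (funext fun n => by
    show c * 0 = 0
    ring)
  smul_add c a b := Subtype.ext (funext fun n => by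
    show c * (a.1 n + b.1 n) = c * a.1 n + c * b.1 n
    ring)
  add_smul c d a := Subtype.ext (funext fun n => by
    show (c + d) * a.1 n = c * a.1 n + d * a.1 n
    ring)
  zero_smul a := Subtype.ext (funext fun n => by
    show (0 : ℂ) * a.1 n = 0
    ring)

noncomputable instance : Algebra ℂ w.Ap :=
  Algebra.ofModule
    (fun c a b => Subtype.ext (funext fun n => by
      show (w.p n : ℂ) * (c * a.1 n) * b.1 n = c * ((w.p n : ℂ) * a.1 n * b.1 n)
      ring))
    (fun c a b => Subtype.ext (funext fun n => by
      show (w.p n : ℂ) * a.1 n * (c * b.1 n) = c * ((w.p n : ℂ) * a.1 n * b.1 n)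
      ring))

theorem bddAbove (a : w.Ap) :
    BddAbove (Set.range fun n => w.p n * ‖a.1 n‖) := by
  obtain ⟨C, hC⟩ := a.2
  exact ⟨C, by rintro x ⟨k, rfl⟩; exact hC k⟩

/-- The norm `‖f‖ = sup_n p(n) |f̂(n)|`, as an `AddGroupNorm`. -/
noncomputable def gnorm (w : GoodWeight) : AddGroupNorm w.Ap where
  toFun a := ⨆ n, w.p n * ‖a.1 n‖
  map_zero' := by
    have h : ∀ n : ℕ, w.p n * ‖(0 : w.Ap).1 n‖ = 0 := fun n => by
      show w.p n * ‖0‖ = 0; simp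
    simp [h]
  add_le' a b := by
    apply ciSup_le
    intro n
    have h1 : ‖a.1 n + b.1 n‖ ≤ ‖a.1 n‖ + ‖b.1 n‖ :=
      norm_add_le _ _
    calc w.p n * ‖(a + b).1 n‖
        ≤ w.p n * ‖a.1 n‖ + w.p n * ‖b.1 n‖ := by
          rw [← mul_add]; exact mul_le_mul_of_nonneg_left h1 (w.pos n).le
      _ ≤ (⨆ k, w.p k * ‖a.1 k‖) + ⨆ k, w.p k * ‖b.1 k‖ :=
          add_le_add (le_ciSup (bddAbove a) n) (le_ciSup (bddAbove b) n)
  neg' a := by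
    have h : (fun n => w.p n * ‖(-a).1 n‖)
        = fun n => w.p n * ‖a.1 n‖ := by
      funext n
      show w.p n * ‖-a.1 n‖ = w.p n * ‖a.1 n‖
      rw [norm_neg]
    show (⨆ n, w.p n * ‖(-a).1 n‖) = ⨆ n, w.p n * ‖a.1 n‖
    rw [h]
  eq_zero_of_map_eq_zero' a h := by
    apply Subtype.ext
    funext n
    have h1 : w.p n * ‖a.1 n‖ ≤ 0 := h ▸ le_ciSup (bddAbove a) n
    have h2 : (0:ℝ) ≤ w.p n * ‖a.1 n‖ :=
      mul_nonneg (w.pos n).le (norm_nonneg _)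
    have h3 : ‖a.1 n‖ = 0 := by
      rcases mul_eq_zero.mp (le_antisymm h1 h2) with h' | h'
      · exact absurd h' (w.pos n).ne'
      · exact h'
    exact norm_eq_zero.mp h3

noncomputable instance : NormedAddCommGroup w.Ap :=
  (gnorm w).toNormedAddCommGroup

theorem norm_def (a : w.Ap) : ‖a‖ = ⨆ n, w.p n * ‖a.1 n‖ := rfl

theorem le_norm (a : w.Ap) (n : ℕ) : w.p n * ‖a.1 n‖ ≤ ‖a‖ :=
  le_ciSup (bddAbove a) n

theorem norm_nonneg' (a : w.Ap) : 0 ≤ ‖a‖ :=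
  le_trans (mul_nonneg (w.pos 0).le (norm_nonneg _)) (le_norm a 0)

noncomputable instance : NormedCommRing w.Ap :=
  { (inferInstance : NormedAddCommGroup w.Ap), (inferInstance : CommRing w.Ap) with
    norm_mul_le := by
      intro a b
      apply ciSup_le
      intro n
      have e : w.p n * ‖(a * b).1 n‖
          = (w.p n * ‖a.1 n‖) * (w.p n * ‖b.1 n‖) := by
        show w.p n * ‖(w.p n : ℂ) * a.1 n * b.1 n‖ = _
        rw [norm_mul, norm_mul, Complex.norm_real, Real.norm_eq_abs, abs_of_pos (w.pos n)]; ring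
      rw [e]
      exact mul_le_mul (le_norm a n) (le_norm b n)
        (mul_nonneg (w.pos n).le (norm_nonneg _)) (norm_nonneg' a) }

noncomputable instance : NormedSpace ℂ w.Ap where
  norm_smul_le c a := by
    apply ciSup_le
    intro n
    have e : w.p n * ‖(c • a).1 n‖
        = ‖c‖ * (w.p n * ‖a.1 n‖) := by
      show w.p n * ‖c * a.1 n‖ = _
      rw [norm_mul]; ring
    rw [e]
    calc ‖c‖ * (w.p n * ‖a.1 n‖)
        ≤ ‖c‖ * ‖a‖ := mul_le_mul_of_nonneg_left (le_norm a n) (norm_nonneg c)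
      _ = ‖c‖ * ‖a‖ := rfl

noncomputable instance : NormedAlgebra ℂ w.Ap :=
  { (inferInstance : Algebra ℂ w.Ap) with
    norm_smul_le := fun c a => norm_smul_le c a }

end Ap

end GoodWeight

/-!
Under `a ↦ (p(n) a(n))ₙ` the algebra `A(p)` is isometrically isomorphic to `ℓ^∞(ℕ, ℂ)` with the
pointwise product, so an element is invertible as soon as its scaled coefficients `p(n) a(n)` are
bounded away from `0`. Replacing each scaled coefficient of `f` of modulus `< r` by `r` moves `f`
by at most `2r` and produces such an element.
-/

lemma Complex.exists_le_norm_and_norm_sub_le (z : ℂ) {r : ℝ} (hr : 0 ≤ r) :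
    ∃ z' : ℂ, r ≤ ‖z'‖ ∧ ‖z' - z‖ ≤ 2 * r := by
  by_cases hz : ‖z‖ < r
  · refine ⟨r, by simp [abs_of_nonneg hr], ?_⟩
    calc ‖(r : ℂ) - z‖ ≤ ‖(r : ℂ)‖ + ‖z‖ := norm_sub_le _ _
      _ ≤ 2 * r := by simp only [Complex.norm_real, Real.norm_of_nonneg hr]; linarith
  · exact ⟨z, not_lt.mp hz, by simpa using hr⟩

namespace GoodWeight.Ap

variable {w : GoodWeight}

lemma norm_p_mul (x : ℂ) (n : ℕ) : ‖(w.p n : ℂ) * x‖ = w.p n * ‖x‖ := by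
  rw [norm_mul, Complex.norm_real, Real.norm_of_nonneg (w.pos n).le]

lemma norm_le_of_forall_le {a : w.Ap} {C : ℝ} (h : ∀ n, w.p n * ‖a.1 n‖ ≤ C) : ‖a‖ ≤ C :=
  ciSup_le h

/-- The inverse of the isometry `A(p) → ℓ^∞`, `a ↦ (p(n) a(n))ₙ`. -/
noncomputable def ofScaled (x : ℕ → ℂ) (hx : ∃ C, ∀ n, ‖x n‖ ≤ C) : w.Ap :=
  ⟨fun n => x n / w.p n, by
    obtain ⟨C, hC⟩ := hx
    refine ⟨C, fun n => ?_⟩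
    rw [norm_div, Complex.norm_real, Real.norm_of_nonneg (w.pos n).le,
      mul_div_cancel₀ _ (w.pos n).ne']
    exact hC n⟩

lemma p_mul_ofScaled (x : ℕ → ℂ) (hx : ∃ C, ∀ n, ‖x n‖ ≤ C) (n : ℕ) :
    (w.p n : ℂ) * (ofScaled (w := w) x hx).1 n = x n :=
  mul_div_cancel₀ _ (Complex.ofReal_ne_zero.mpr (w.pos n).ne')

lemma isUnit_of_le_norm_p_mul {a : w.Ap} {c : ℝ} (hc : 0 < c)
    (h : ∀ n, c ≤ ‖(w.p n : ℂ) * a.1 n‖) : IsUnit a := by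
  have hinv : ∃ C, ∀ n, ‖((w.p n : ℂ) * a.1 n)⁻¹‖ ≤ C :=
    ⟨c⁻¹, fun n => by rw [norm_inv]; exact inv_anti₀ hc (h n)⟩
  refine IsUnit.of_mul_eq_one (ofScaled _ hinv) (Subtype.ext (funext fun n => ?_))
  have hpa : (w.p n : ℂ) * a.1 n ≠ 0 := norm_pos_iff.mp (hc.trans_le (h n))
  change (w.p n : ℂ) * a.1 n * (((w.p n : ℂ) * a.1 n)⁻¹ / w.p n) = (w.p n : ℂ)⁻¹
  rw [mul_div_assoc', mul_inv_cancel₀ hpa, one_div]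

lemma exists_isUnit_norm_sub_le (f : w.Ap) {r : ℝ} (hr : 0 < r) :
    ∃ g : w.Ap, IsUnit g ∧ ‖g - f‖ ≤ 2 * r := by
  choose z hz_ge hz_sub using fun n =>
    Complex.exists_le_norm_and_norm_sub_le ((w.p n : ℂ) * f.1 n) hr.le
  have hz : ∃ C, ∀ n, ‖z n‖ ≤ C := by
    obtain ⟨C, hC⟩ := f.2
    refine ⟨C + 2 * r, fun n => ?_⟩
    calc ‖z n‖ ≤ ‖(w.p n : ℂ) * f.1 n‖ + ‖z n - (w.p n : ℂ) * f.1 n‖ := norm_le_insert' _ _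
      _ ≤ C + 2 * r := add_le_add ((norm_p_mul _ n).trans_le (hC n)) (hz_sub n)
  refine ⟨ofScaled z hz, isUnit_of_le_norm_p_mul hr fun n => ?_, norm_le_of_forall_le fun n => ?_⟩
  · rw [p_mul_ofScaled]; exact hz_ge n
  · rw [← norm_p_mul]
    change ‖(w.p n : ℂ) * ((ofScaled z hz).1 n - f.1 n)‖ ≤ 2 * r
    rw [mul_sub, p_mul_ofScaled]
    exact hz_sub n

end GoodWeight.Ap

theorem topologicalStableRankOne_general (w : GoodWeight)
    (f : w.Ap) (δ : ℝ) (hδ : 0 < δ) :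
    ∃ g : w.Ap, IsUnit g ∧ ‖g - f‖ < δ := by
  obtain ⟨g, hg_unit, hg_dist⟩ :=
    GoodWeight.Ap.exists_isUnit_norm_sub_le f (by positivity : 0 < δ / 3)
  exact ⟨g, hg_unit, by linarith⟩

/-- The topological stable rank of `A(p)` is `1`: the invertible elements
are dense in `A(p)`. -/
theorem topologicalStableRankOne (w : GoodWeight) (hg : w.Grows)
    (f : w.Ap) (δ : ℝ) (hδ : 0 < δ) :
    ∃ g : w.Ap, IsUnit g ∧ ‖g - f‖ < δ :=
  topologicalStableRankOne_general w f δ hδ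
end

section
/- Let m, n ∈ ℕ, A ∈ ℂ^{m×n}, b ∈ ℂ^{m×1}, and δ > 0 be such that ‖A*y‖₂ ≥ δ|⟨y, b⟩₂| for all y ∈ ℂ^{m×1}. Then there exists x ∈ ℂ^{n×1} with Ax = b and ‖x‖₂ ≤ 1/δ. -/
open scoped InnerProductSpace

namespace LinearMap

variable {𝕜 E F : Type*} [RCLike 𝕜]
  [NormedAddCommGroup E] [InnerProductSpace 𝕜 E] [FiniteDimensional 𝕜 E]
  [NormedAddCommGroup F] [InnerProductSpace 𝕜 F] [FiniteDimensional 𝕜 F]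

theorem mem_orthogonal_ker_adjoint_of_forall_mul_norm_inner_le (T : F →ₗ[𝕜] E) {b : E} {δ : ℝ}
    (hδ : 0 < δ) (h : ∀ y, δ * ‖⟪y, b⟫_𝕜‖ ≤ ‖T.adjoint y‖) : b ∈ (ker T.adjoint)ᗮ := by
  intro y hy
  have hle : δ * ‖⟪y, b⟫_𝕜‖ ≤ 0 := by simpa [mem_ker.mp hy] using h y
  exact norm_le_zero_iff.mp (nonpos_of_mul_nonpos_right hle hδ)

theorem exists_apply_adjoint_eq_of_mem_orthogonal_ker_adjoint (T : F →ₗ[𝕜] E) {b : E}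
    (hb : b ∈ (ker T.adjoint)ᗮ) : ∃ z, T (T.adjoint z) = b := by
  rw [orthogonal_ker, adjoint_adjoint, ← range_self_comp_adjoint] at hb
  exact hb

theorem norm_adjoint_sq_eq_norm_inner {T : F →ₗ[𝕜] E} {z b : E} (hz : T (T.adjoint z) = b) :
    ‖T.adjoint z‖ ^ 2 = ‖⟪z, b⟫_𝕜‖ := by
  rw [← hz, ← adjoint_inner_left, inner_self_eq_norm_sq_to_K, norm_pow, RCLike.norm_ofReal,
    abs_norm]

/-- The minimal-norm solution `x = T† z` of `T x = b` satisfies `‖x‖² = |⟪z, b⟫|`, so the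
hypothesis applied to `y = z` reads `δ ‖x‖² ≤ ‖x‖`. -/
theorem exists_apply_eq_and_norm_le_of_forall_mul_norm_inner_le (T : F →ₗ[𝕜] E) {b : E} {δ : ℝ}
    (hδ : 0 < δ) (h : ∀ y, δ * ‖⟪y, b⟫_𝕜‖ ≤ ‖T.adjoint y‖) :
    ∃ x, T x = b ∧ ‖x‖ ≤ 1 / δ := by
  obtain ⟨z, hz⟩ := exists_apply_adjoint_eq_of_mem_orthogonal_ker_adjoint T
    (mem_orthogonal_ker_adjoint_of_forall_mul_norm_inner_le T hδ h)
  refine ⟨T.adjoint z, hz, ?_⟩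
  have hsq : δ * ‖T.adjoint z‖ ^ 2 ≤ ‖T.adjoint z‖ := norm_adjoint_sq_eq_norm_inner hz ▸ h z
  rw [le_div_iff₀ hδ]
  nlinarith [norm_nonneg (T.adjoint z)]

end LinearMap

theorem solvability_linear_algebra_general (m n : ℕ)
    (A : Matrix (Fin m) (Fin n) ℂ) (b : Fin m → ℂ) (δ : ℝ) (hδ : 0 < δ)
    (h : ∀ y : Fin m → ℂ,
      δ * ‖∑ i, starRingEnd ℂ (y i) * b i‖
        ≤ Real.sqrt (∑ j, ‖A.conjTranspose.mulVec y j‖ ^ 2)) :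
    ∃ x : Fin n → ℂ, A.mulVec x = b ∧ Real.sqrt (∑ j, ‖x j‖ ^ 2) ≤ 1 / δ := by
  have h' : ∀ y : EuclideanSpace ℂ (Fin m),
      δ * ‖⟪y, WithLp.toLp 2 b⟫_ℂ‖ ≤ ‖(Matrix.toEuclideanLin A).adjoint y‖ := by
    intro y
    rw [← Matrix.toEuclideanLin_conjTranspose_eq_adjoint, EuclideanSpace.norm_eq,
      PiLp.inner_apply]
    simpa [mul_comm] using h y.ofLp
  obtain ⟨x, hAx, hx⟩ :=
    LinearMap.exists_apply_eq_and_norm_le_of_forall_mul_norm_inner_le _ hδ h'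
  exact ⟨x.ofLp, congrArg WithLp.ofLp hAx, by rwa [← EuclideanSpace.norm_eq]⟩

/-- If `‖A* y‖₂ ≥ δ |⟨y, b⟩₂|` for all `y ∈ ℂᵐ`, then `Ax = b` has a
solution `x ∈ ℂⁿ` with `‖x‖₂ ≤ 1/δ`. -/
theorem solvability_linear_algebra (m n : ℕ) (hm : 0 < m) (hn : 0 < n)
    (A : Matrix (Fin m) (Fin n) ℂ) (b : Fin m → ℂ) (δ : ℝ) (hδ : 0 < δ)
    (h : ∀ y : Fin m → ℂ,
      δ * ‖∑ i, starRingEnd ℂ (y i) * b i‖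
        ≤ Real.sqrt (∑ j, ‖A.conjTranspose.mulVec y j‖ ^ 2)) :
    ∃ x : Fin n → ℂ, A.mulVec x = b ∧ Real.sqrt (∑ j, ‖x j‖ ^ 2) ≤ 1 / δ :=
  solvability_linear_algebra_general m n A b δ hδ h
end
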